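/- arXiv:1707.05021 — 2 statements merged into one kernel-verified Lean document; each statement's English description precedes it below -/
import Mathlib

section
/- Let H > 0 and 0 < φ ≤ π. Then ∫₀^φ (sin(θ/2))^{2H} sin θ / √(cos θ − cos φ) dθ = √2 · B(H+1, 1/2) · (sin(φ/2))^{2H+1}. -/
/-!
The substitution `u = sin² (θ / 2)` does everything: `cos θ - cos φ = 2 (sin² (φ / 2) - u)` and
`du = sin θ / 2 dθ`, so the integral becomes `√2 ∫₀^c u ^ H (c - u) ^ (-1/2) du` with
`c = sin² (φ / 2)`, a Beta integral scaled to `[0, c]`, equal to `c ^ (H + 1/2) B(H + 1, 1/2)`.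
-/

open scoped Real

/-- The Euler Beta function `B(a,b) = Γ(a)Γ(b)/Γ(a+b)`. -/
noncomputable def eulerBeta (a b : ℝ) : ℝ :=
  Real.Gamma a * Real.Gamma b / Real.Gamma (a + b)

open Real Set intervalIntegral

lemma integral_rpow_mul_sub_rpow_eq_eulerBeta {a b c : ℝ} (ha : 0 < a) (hb : 0 < b) (hc : 0 < c) :
    ∫ x in 0..c, x ^ (a - 1) * (c - x) ^ (b - 1) = c ^ (a + b - 1) * eulerBeta a b := by
  have hcomplex := Complex.betaIntegral_scaled a b hc
  rw [Complex.betaIntegral_eq_Gamma_mul_div _ _ (by simpa) (by simpa)] at hcomplex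
  apply Complex.ofReal_injective
  rw [← intervalIntegral.integral_ofReal]
  convert hcomplex using 1
  · refine integral_congr fun x hx => ?_
    rw [uIcc_of_le hc.le] at hx
    push_cast
    rw [Complex.ofReal_cpow hx.1, Complex.ofReal_cpow (sub_nonneg.2 hx.2)]
    push_cast
    ring_nf
  · simp only [eulerBeta, Complex.ofReal_mul, Complex.ofReal_div, ← Complex.Gamma_ofReal,
      Complex.ofReal_add, Complex.ofReal_sub, Complex.ofReal_one, Complex.ofReal_cpow hc.le]

lemma cos_eq_one_sub_two_mul_sin_half_sq (x : ℝ) : cos x = 1 - 2 * sin (x / 2) ^ 2 := by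
  rw [← cos_two_mul_eq_one_sub, mul_div_cancel₀ _ two_ne_zero]

lemma hasDerivAt_sin_half_sq (θ : ℝ) : HasDerivAt (fun θ => sin (θ / 2) ^ 2) (sin θ / 2) θ := by
  have h : (fun θ => sin (θ / 2) ^ 2) = fun θ => (1 - cos θ) / 2 :=
    funext fun θ => by rw [cos_eq_one_sub_two_mul_sin_half_sq]; ring
  rw [h]
  simpa using ((hasDerivAt_cos θ).const_sub 1).div_const 2

lemma sin_half_sq_le_sin_half_sq {θ φ : ℝ} (hθ : 0 ≤ θ) (hθφ : θ ≤ φ) (hφ : φ ≤ π) :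
    sin (θ / 2) ^ 2 ≤ sin (φ / 2) ^ 2 :=
  pow_le_pow_left₀ (sin_nonneg_of_nonneg_of_le_pi (by linarith) (by linarith))
    (sin_le_sin_of_le_of_le_pi_div_two (by linarith) (by linarith) (by linarith)) 2

-- At equality in `hθφ` both sides vanish, since `x / √0 = 0` and `0 ^ (-(1 / 2)) = 0`.
lemma sin_half_rpow_mul_sin_div_sqrt_cos_sub_cos {θ φ : ℝ} (H : ℝ) (hθ : 0 ≤ sin (θ / 2))
    (hθφ : sin (θ / 2) ^ 2 ≤ sin (φ / 2) ^ 2) :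
    sin (θ / 2) ^ (2 * H) * sin θ / √(cos θ - cos φ) =
      √2 * ((sin (θ / 2) ^ 2) ^ H * (sin (φ / 2) ^ 2 - sin (θ / 2) ^ 2) ^ (-(1 / 2) : ℝ)) *
        (sin θ / 2) := by
  have hsub : cos θ - cos φ = 2 * (sin (φ / 2) ^ 2 - sin (θ / 2) ^ 2) := by
    rw [cos_eq_one_sub_two_mul_sin_half_sq θ, cos_eq_one_sub_two_mul_sin_half_sq φ]
    ring
  rw [hsub, sqrt_mul zero_le_two, rpow_neg (sub_nonneg.2 hθφ), ← sqrt_eq_rpow,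
    ← rpow_natCast_mul hθ, Nat.cast_ofNat]
  field_simp
  rw [sq_sqrt zero_le_two]
  ring

theorem inner_integral_eval (H : ℝ) (hH : 0 < H) (φ : ℝ) (hφ0 : 0 < φ) (hφπ : φ ≤ π) :
    ∫ θ in (0:ℝ)..φ,
        (Real.sin (θ / 2)) ^ (2 * H) * Real.sin θ / Real.sqrt (Real.cos θ - Real.cos φ)
      = Real.sqrt 2 * eulerBeta (H + 1) (1 / 2) * (Real.sin (φ / 2)) ^ (2 * H + 1) := by
  set s := sin (φ / 2)
  have hs : 0 < s := sin_pos_of_pos_of_lt_pi (by linarith) (by linarith)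
  let g : ℝ → ℝ := fun u => √2 * (u ^ H * (s ^ 2 - u) ^ (-(1 / 2) : ℝ))
  calc _ = ∫ θ in 0..φ, (g ∘ fun θ => sin (θ / 2) ^ 2) θ * (sin θ / 2) := by
        refine integral_congr fun θ hθ => ?_
        rw [uIcc_of_le hφ0.le] at hθ
        exact sin_half_rpow_mul_sin_div_sqrt_cos_sub_cos H
          (sin_nonneg_of_nonneg_of_le_pi (by linarith [hθ.1]) (by linarith [hθ.2]))
          (sin_half_sq_le_sin_half_sq hθ.1 hθ.2 hφπ)
    _ = ∫ u in sin (0 / 2) ^ 2..s ^ 2, g u := by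
        refine integral_comp_mul_deriv_of_deriv_nonneg (by fun_prop)
          (fun θ _ => hasDerivAt_sin_half_sq θ) fun θ hθ => ?_
        rw [min_eq_left hφ0.le, max_eq_right hφ0.le] at hθ
        exact div_nonneg (sin_nonneg_of_nonneg_of_le_pi hθ.1.le (hθ.2.le.trans hφπ)) zero_le_two
    _ = √2 * ((s ^ 2) ^ (H + 1 + 1 / 2 - 1) * eulerBeta (H + 1) (1 / 2)) := by
        have hbeta := integral_rpow_mul_sub_rpow_eq_eulerBeta (a := H + 1) (b := 1 / 2)
          (by linarith) one_half_pos (pow_pos hs 2)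
        norm_num at hbeta
        rw [zero_div, sin_zero, zero_pow two_ne_zero, integral_const_mul, hbeta]
    _ = _ := by
        rw [← rpow_natCast_mul hs.le, Nat.cast_ofNat,
          show (2 : ℝ) * (H + 1 + 1 / 2 - 1) = 2 * H + 1 by ring]
        ring
end

section
/- Let 0 < H ≤ 1/2. Then lim_{ℓ→∞} ℓ^{2H+2} ∫₀^π sin((ℓ + 1/2)φ) (sin(φ/2))^{2H+1} dφ = −2^{-(2H+1)} Γ(2H+2) sin(πH), where the limit is taken over integers ℓ → ∞. -/
/-!
With `J p c = oscIntegral p c = ∫₀^{π/2} sin (c θ) sin^p θ dθ`, the substitution `φ = 2θ`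
turns the integral into `2 J p (2ℓ + 1)` with `p = 2H + 1`. Integrating
`sin ((2k + 2) θ) · (sin^{p+1} θ)'` by parts (the boundary terms vanish) and expanding with the
addition formulas gives `J p (2k + 3) = (k + (1 - p)/2) / (k + (p + 3)/2) · J p (2k + 1)`, so
`J p (2ℓ + 1)` is `J p 1` times a quotient of rising factorials, which by Euler's limit formula
for `Γ` behaves like `Γ((p + 3)/2) / Γ((1 - p)/2) · ℓ^{-(p + 1)}`. Finally
`J p 1 = ∫₀^{π/2} sin^{p+1}` is a Beta integral, and the reflection and duplication formulas put
the constant in the stated form.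
-/

open Real MeasureTheory Filter Set Topology

noncomputable def oscIntegral (p c : ℝ) : ℝ :=
  ∫ θ in (0:ℝ)..π / 2, sin (c * θ) * sin θ ^ p

theorem integral_sin_mul_sin_half_rpow (p c : ℝ) :
    ∫ φ in (0:ℝ)..π, sin (c * φ) * sin (φ / 2) ^ p = 2 * oscIntegral p (2 * c) := by
  have h := intervalIntegral.integral_comp_mul_left (fun φ => sin (c * φ) * sin (φ / 2) ^ p)
    (a := 0) (b := π / 2) two_ne_zero
  rw [mul_zero, mul_div_cancel₀ π two_ne_zero] at h
  simp only [mul_div_cancel_left₀ _ (two_ne_zero' ℝ), ← mul_assoc, mul_comm c 2] at h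
  rw [oscIntegral, h, smul_eq_mul, mul_inv_cancel_left₀ two_ne_zero]

theorem continuous_sin_mul_sin_rpow {p : ℝ} (hp : 0 ≤ p) (c : ℝ) :
    Continuous fun θ => sin (c * θ) * sin θ ^ p := by
  fun_prop (disch := exact fun _ => Or.inr hp)

theorem oscIntegral_two_mul_add_three {p : ℝ} (hp : 0 ≤ p) (k : ℕ) :
    oscIntegral p (2 * k + 3)
      = ((1 - p) / 2 + k) / ((p + 3) / 2 + k) * oscIntegral p (2 * k + 1) := by
  set m : ℝ := 2 * k + 2 with hm
  have integrable (c : ℝ) :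
      IntervalIntegrable (fun θ => sin (c * θ) * sin θ ^ p) volume 0 (π / 2) :=
    (continuous_sin_mul_sin_rpow hp c).intervalIntegrable _ _
  have sin_add_one (θ : ℝ) : sin ((m + 1) * θ) = sin (m * θ) * cos θ + cos (m * θ) * sin θ := by
    rw [add_mul, one_mul, sin_add]
  have sin_sub_one (θ : ℝ) : sin ((m - 1) * θ) = sin (m * θ) * cos θ - cos (m * θ) * sin θ := by
    rw [sub_mul, one_mul, sin_sub]
  have hu (θ : ℝ) : HasDerivAt (fun θ => sin (m * θ)) (m * cos (m * θ)) θ := by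
    simpa [mul_comm] using ((hasDerivAt_id θ).const_mul m).sin
  have hv (θ : ℝ) : HasDerivAt (fun θ => sin θ ^ (p + 1)) ((p + 1) * sin θ ^ p * cos θ) θ := by
    have := (hasDerivAt_sin θ).rpow_const (p := p + 1) (Or.inr (by linarith))
    rw [add_sub_cancel_right] at this
    exact this.congr_deriv (by ring)
  have ibp := intervalIntegral.integral_mul_deriv_eq_deriv_mul (a := 0) (b := π / 2)
    (fun θ _ => hu θ) (fun θ _ => hv θ) (by apply Continuous.intervalIntegrable; fun_prop)
    (by apply Continuous.intervalIntegrable; fun_prop (disch := exact fun _ => Or.inr hp))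
  have boundary : sin (m * (π / 2)) = 0 := by
    rw [show m * (π / 2) = (k + 1 : ℕ) * π by push_cast; ring, sin_nat_mul_pi]
  have lhs : ∫ θ in (0:ℝ)..π / 2, sin (m * θ) * ((p + 1) * sin θ ^ p * cos θ)
      = (p + 1) / 2 * (oscIntegral p (m + 1) + oscIntegral p (m - 1)) := by
    rw [oscIntegral, oscIntegral, ← intervalIntegral.integral_add (integrable _) (integrable _),
      ← intervalIntegral.integral_const_mul]
    congr 1 with θ
    rw [sin_add_one, sin_sub_one]
    ring
  have rhs : ∫ θ in (0:ℝ)..π / 2, m * cos (m * θ) * sin θ ^ (p + 1)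
      = m / 2 * (oscIntegral p (m + 1) - oscIntegral p (m - 1)) := by
    rw [oscIntegral, oscIntegral, ← intervalIntegral.integral_sub (integrable _) (integrable _),
      ← intervalIntegral.integral_const_mul]
    refine intervalIntegral.integral_congr fun θ hθ => ?_
    rw [uIcc_of_le (by positivity)] at hθ
    have : 0 ≤ sin θ := sin_nonneg_of_nonneg_of_le_pi hθ.1 (by linarith [hθ.2, pi_pos])
    simp only [rpow_add_one' this (by linarith : p + 1 ≠ 0), sin_add_one, sin_sub_one]
    ring
  rw [lhs, rhs, boundary, mul_zero, sin_zero, zero_mul, zero_mul, sub_zero, zero_sub, hm,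
    show (2 * k + 2 : ℝ) + 1 = 2 * k + 3 by ring,
    show (2 * k + 2 : ℝ) - 1 = 2 * k + 1 by ring] at ibp
  have : (p + 3) / 2 + k ≠ 0 := by positivity
  rw [div_mul_eq_mul_div, eq_div_iff this]
  linear_combination ibp

theorem oscIntegral_two_mul_add_one {p : ℝ} (hp : 0 ≤ p) (n : ℕ) :
    oscIntegral p (2 * n + 1)
      = (∏ k ∈ Finset.range n, ((1 - p) / 2 + k) / ((p + 3) / 2 + k)) * oscIntegral p 1 := by
  induction n with
  | zero => simp
  | succ n ih =>
    rw [Finset.prod_range_succ, Nat.cast_add_one, show 2 * ((n : ℝ) + 1) + 1 = 2 * n + 3 by ring,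
      oscIntegral_two_mul_add_three hp, ih]
    ring

theorem integral_rpow_mul_one_sub_rpow {u v : ℝ} (hu : 0 < u) (hv : 0 < v) :
    ∫ x in (0:ℝ)..1, x ^ (u - 1) * (1 - x) ^ (v - 1) = Gamma u * Gamma v / Gamma (u + v) := by
  have h := Complex.betaIntegral_eq_Gamma_mul_div u v (by simpa) (by simpa)
  rw [← Complex.ofReal_add, Complex.Gamma_ofReal, Complex.Gamma_ofReal, Complex.Gamma_ofReal,
    ← Complex.ofReal_mul, ← Complex.ofReal_div, Complex.betaIntegral] at h
  apply Complex.ofReal_injective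
  rw [← h, ← intervalIntegral.integral_ofReal]
  refine intervalIntegral.integral_congr fun x hx => ?_
  rw [uIcc_of_le zero_le_one] at hx
  push_cast
  rw [Complex.ofReal_cpow hx.1, Complex.ofReal_cpow (sub_nonneg.2 hx.2)]
  push_cast
  rfl

theorem integral_sin_rpow_eq_integral_rpow_mul_one_sub_rpow (q : ℝ) :
    ∫ θ in (0:ℝ)..π / 2, sin θ ^ q
      = (∫ x in (0:ℝ)..1, x ^ ((q - 1) / 2) * (1 - x) ^ (-(1 : ℝ) / 2)) / 2 := by
  have hπ : (0:ℝ) ≤ π / 2 := by positivity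
  have subst := intervalIntegral.integral_deriv_smul_comp_of_deriv_nonneg
    (f := fun θ => sin θ ^ 2) (f' := fun θ => 2 * sin θ * cos θ)
    (g := fun x => x ^ ((q - 1) / 2) * (1 - x) ^ (-(1 : ℝ) / 2)) (a := 0) (b := π / 2)
    (by fun_prop) (fun θ _ => by simpa [mul_assoc] using (hasDerivAt_sin θ).fun_pow 2)
    (fun θ hθ => by
      rw [min_eq_left hπ, max_eq_right hπ] at hθ
      have := sin_nonneg_of_nonneg_of_le_pi hθ.1.le (by linarith [hθ.2, pi_pos])
      have := cos_nonneg_of_mem_Icc ⟨by linarith [hθ.1, pi_pos], hθ.2.le⟩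
      positivity)
  simp only [sin_zero, sin_pi_div_two, Function.comp, smul_eq_mul, one_pow,
    zero_pow two_ne_zero] at subst
  rw [← subst, eq_div_iff two_ne_zero, ← intervalIntegral.integral_mul_const]
  refine intervalIntegral.integral_congr_Ioo_of_le hπ fun θ hθ => ?_
  have hsin : 0 < sin θ := sin_pos_of_pos_of_lt_pi hθ.1 (by linarith [hθ.2, pi_pos])
  have hcos : 0 < cos θ := cos_pos_of_mem_Ioo ⟨by linarith [hθ.1, pi_pos], hθ.2⟩
  rw [← cos_sq', ← rpow_natCast, ← rpow_natCast, ← rpow_mul hsin.le, ← rpow_mul hcos.le,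
    show (2 : ℕ) * ((q - 1) / 2) = q - 1 by push_cast; ring,
    show (2 : ℕ) * (-1 / 2 : ℝ) = -1 by norm_num, rpow_neg_one, rpow_sub_one hsin.ne']
  field_simp

theorem integral_sin_rpow {q : ℝ} (hq : -1 < q) :
    ∫ θ in (0:ℝ)..π / 2, sin θ ^ q = √π * Gamma ((q + 1) / 2) / (2 * Gamma ((q + 2) / 2)) := by
  have h := integral_rpow_mul_one_sub_rpow (u := (q + 1) / 2) (v := 1 / 2) (by linarith)
    one_half_pos
  rw [show (q + 1) / 2 - 1 = (q - 1) / 2 by ring, show (1 / 2 : ℝ) - 1 = -1 / 2 by norm_num,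
    show (q + 1) / 2 + 1 / 2 = (q + 2) / 2 by ring, Gamma_one_half_eq] at h
  rw [integral_sin_rpow_eq_integral_rpow_mul_one_sub_rpow, h]
  ring

theorem oscIntegral_one {p : ℝ} (hp : -1 < p) :
    oscIntegral p 1 = √π * Gamma ((p + 2) / 2) / (2 * Gamma ((p + 3) / 2)) := by
  have h := integral_sin_rpow (q := p + 1) (by linarith)
  rw [show p + 1 + 1 = p + 2 by ring, show p + 1 + 2 = p + 3 by ring] at h
  rw [oscIntegral, ← h]
  refine intervalIntegral.integral_congr fun θ hθ => ?_
  rw [uIcc_of_le (by positivity)] at hθ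
  have : 0 ≤ sin θ := sin_nonneg_of_nonneg_of_le_pi hθ.1 (by linarith [hθ.2, pi_pos])
  rw [one_mul, rpow_add_one' this (by linarith : p + 1 ≠ 0), mul_comm]

theorem tendsto_rpow_mul_prod_div {a : ℝ} (ha : Gamma a ≠ 0) (b : ℝ) :
    Tendsto (fun n : ℕ => (n : ℝ) ^ (b - a) * ∏ k ∈ Finset.range n, (a + k) / (b + k)) atTop
      (𝓝 (Gamma b / Gamma a)) := by
  have hquot := ((GammaSeq_tendsto_Gamma b).div (GammaSeq_tendsto_Gamma a) ha).mul
    ((tendsto_one_div_atTop_nhds_zero_nat.const_add 1).rpow_const (p := b - a)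
      (Or.inl (by norm_num)))
  rw [add_zero, one_rpow, mul_one] at hquot
  rw [← tendsto_add_atTop_iff_nat 1]
  refine hquot.congr' ((eventually_ne_atTop 0).mono fun n hn => ?_)
  have hn' : (0 : ℝ) < n := by positivity
  simp only [Pi.div_apply, GammaSeq]
  rw [Finset.prod_div_distrib, one_add_div hn'.ne', div_rpow (by positivity) hn'.le,
    rpow_sub hn', Nat.cast_add_one]
  field_simp

theorem Gamma_ne_zero_of_sin_pi_mul_ne_zero {s : ℝ} (h : sin (π * s) ≠ 0) : Gamma s ≠ 0 := by
  intro hs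
  have := Gamma_mul_Gamma_one_sub s
  rw [hs, zero_mul, eq_comm, div_eq_zero_iff] at this
  exact this.elim pi_ne_zero h

theorem sqrt_pi_mul_Gamma_add_three_halves_div_Gamma_neg {H : ℝ} (h : sin (π * H) ≠ 0) :
    √π * Gamma (H + 3 / 2) / Gamma (-H)
      = -(2 : ℝ) ^ (-(2 * H + 1)) * Gamma (2 * H + 2) * sin (π * H) := by
  have hΓ : Gamma (-H) ≠ 0 :=
    Gamma_ne_zero_of_sin_pi_mul_ne_zero (by rwa [mul_neg, sin_neg, neg_ne_zero])
  have reflection := Gamma_mul_Gamma_one_sub (-H)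
  rw [mul_neg, sin_neg, sub_neg_eq_add, eq_div_iff (neg_ne_zero.2 h)] at reflection
  have duplication := Gamma_mul_Gamma_add_half (1 + H)
  rw [show 1 + H + 1 / 2 = H + 3 / 2 by ring, show 1 - 2 * (1 + H) = -(2 * H + 1) by ring,
    show 2 * (1 + H) = 2 * H + 2 by ring] at duplication
  rw [div_eq_iff hΓ]
  refine mul_left_cancel₀ (sqrt_ne_zero'.2 pi_pos) ?_
  linear_combination (Gamma (H + 3 / 2)) * mul_self_sqrt pi_pos.le
    - sin (π * H) * Gamma (-H) * duplication - Gamma (H + 3 / 2) * reflection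

theorem oscillatory_integral_asymptotics (H : ℝ) (hH0 : 0 < H) (hH : H ≤ 1 / 2) :
    Filter.Tendsto
      (fun ℓ : ℕ => (ℓ : ℝ) ^ (2 * H + 2) *
        ∫ φ in (0:ℝ)..π, Real.sin (((ℓ : ℝ) + 1 / 2) * φ) * (Real.sin (φ / 2)) ^ (2 * H + 1))
      Filter.atTop
      (nhds (-(2 : ℝ) ^ (-(2 * H + 1)) * Real.Gamma (2 * H + 2) * Real.sin (π * H))) := by
  have hsin : sin (π * H) ≠ 0 :=
    (sin_pos_of_pos_of_lt_pi (by positivity) (by nlinarith [pi_pos])).ne'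
  have ha : (1 - (2 * H + 1)) / 2 = -H := by ring
  have hb : (2 * H + 1 + 3) / 2 = H + 2 := by ring
  have hΓ : Gamma (-H) ≠ 0 :=
    Gamma_ne_zero_of_sin_pi_mul_ne_zero (by rwa [mul_neg, sin_neg, neg_ne_zero])
  have hlim := (tendsto_rpow_mul_prod_div hΓ (H + 2)).const_mul (2 * oscIntegral (2 * H + 1) 1)
  have hval : 2 * oscIntegral (2 * H + 1) 1 * (Gamma (H + 2) / Gamma (-H))
      = -(2 : ℝ) ^ (-(2 * H + 1)) * Gamma (2 * H + 2) * sin (π * H) := by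
    have : Gamma (H + 2) ≠ 0 := (Gamma_pos_of_pos (by linarith)).ne'
    rw [oscIntegral_one (by linarith), show (2 * H + 1 + 2) / 2 = H + 3 / 2 by ring, hb,
      ← sqrt_pi_mul_Gamma_add_three_halves_div_Gamma_neg hsin]
    field_simp
  rw [hval] at hlim
  refine hlim.congr fun ℓ => ?_
  rw [integral_sin_mul_sin_half_rpow, show 2 * ((ℓ : ℝ) + 1 / 2) = 2 * ℓ + 1 by ring,
    oscIntegral_two_mul_add_one (by linarith), ha, hb, show H + 2 - -H = 2 * H + 2 by ring]
  ring
end
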